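/- Let $f(X) = \frac{1}{2s}\|S U X\|_F^2 - \langle U^T \tilde{Y}, X\rangle$ be minimized at $X_{t+1}$ over $\mathbb{R}^{d \times p}$, and let $X^{LS}$ minimize $\frac12\|Y - UX\|_F^2$. Then, with $\Delta = X_{t+1} - X^{LS}$ and $\tilde{Y} = Y - (I - S^T S/s) U X_t$, adding the two first-order optimality inequalities yields $\frac{1}{s}\|S U \Delta\|_F^2 \leq \langle U(X^{LS} - X_t), (I - \frac{S^T S}{s}) U \Delta \rangle$. -/
import Mathlib

open Matrix

namespace IhsAux

noncomputable def ip {m n : ℕ} (A B : Matrix (Fin m) (Fin n) ℝ) : ℝ :=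
  ∑ i, ∑ j, A i j * B i j

lemma ip_self_nonneg {m n : ℕ} (A : Matrix (Fin m) (Fin n) ℝ) : 0 ≤ ip A A := by
  apply Finset.sum_nonneg; intro i _
  apply Finset.sum_nonneg; intro j _
  exact mul_self_nonneg _

lemma sumsq_eq_ip {m n : ℕ} (A : Matrix (Fin m) (Fin n) ℝ) :
    (∑ i, ∑ j, A i j ^ 2) = ip A A := by
  simp [ip, sq]

lemma ip_sub_left {m n : ℕ} (A B C : Matrix (Fin m) (Fin n) ℝ) :
    ip (A - B) C = ip A C - ip B C := by
  simp [ip, sub_mul, Finset.sum_sub_distrib]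

lemma ip_sub_right {m n : ℕ} (A B C : Matrix (Fin m) (Fin n) ℝ) :
    ip A (B - C) = ip A B - ip A C := by
  simp [ip, mul_sub, Finset.sum_sub_distrib]

lemma ip_smul_left {m n : ℕ} (c : ℝ) (A B : Matrix (Fin m) (Fin n) ℝ) :
    ip (c • A) B = c * ip A B := by
  simp [ip, Finset.mul_sum]; apply Finset.sum_congr rfl; intros; apply Finset.sum_congr rfl
  intros; ring

lemma ip_smul_right {m n : ℕ} (c : ℝ) (A B : Matrix (Fin m) (Fin n) ℝ) :
    ip A (c • B) = c * ip A B := by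
  simp [ip, Finset.mul_sum]; apply Finset.sum_congr rfl; intros; apply Finset.sum_congr rfl
  intros; ring

lemma ip_comm {m n : ℕ} (A B : Matrix (Fin m) (Fin n) ℝ) : ip A B = ip B A := by
  simp [ip, mul_comm]

lemma ip_eq_trace {m n : ℕ} (A B : Matrix (Fin m) (Fin n) ℝ) :
    ip A B = Matrix.trace (Aᵀ * B) := by
  simp only [ip, Matrix.trace, Matrix.diag, Matrix.mul_apply, Matrix.transpose_apply]
  exact Finset.sum_comm

lemma ip_adj {m n q : ℕ} (A : Matrix (Fin m) (Fin n) ℝ)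
    (C : Matrix (Fin n) (Fin q) ℝ) (B : Matrix (Fin m) (Fin q) ℝ) :
    ip (A * C) B = ip C (Aᵀ * B) := by
  rw [ip_eq_trace, ip_eq_trace, Matrix.transpose_mul, Matrix.mul_assoc]

lemma lin_eq_zero {q l : ℝ} (hq : 0 ≤ q) (h : ∀ t : ℝ, 0 ≤ q * t ^ 2 + l * t) :
    l = 0 := by
  have hq1 : (0:ℝ) < q + 1 := by linarith
  set t : ℝ := -l / (q + 1) with ht
  have key := h t
  have htq : (q + 1) * t = -l := by rw [ht]; field_simp
  have h2 : 0 ≤ (q + 1) ^ 2 * (q * t ^ 2 + l * t) := by positivity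
  have h3 : (q + 1) ^ 2 * (q * t ^ 2 + l * t)
      = q * ((q + 1) * t) ^ 2 + (l * ((q + 1) * t)) * (q + 1) := by ring
  rw [h3, htq] at h2
  have hl2 : l ^ 2 ≤ 0 := by nlinarith
  have := sq_nonneg l
  have hsq : l ^ 2 = 0 := le_antisymm hl2 this
  exact sq_eq_zero_iff.mp hsq

end IhsAux

open IhsAux

theorem ihs_basic_inequality {N d p s : ℕ} (hs : 0 < s)
    (U : Matrix (Fin N) (Fin d) ℝ) (Y : Matrix (Fin N) (Fin p) ℝ)
    (S : Matrix (Fin s) (Fin N) ℝ) (Xt Xnext XLS : Matrix (Fin d) (Fin p) ℝ)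
    (hLS : ∀ X : Matrix (Fin d) (Fin p) ℝ,
      (1 / 2 : ℝ) * ∑ i, ∑ j, (Y - U * XLS) i j ^ 2 ≤
        (1 / 2 : ℝ) * ∑ i, ∑ j, (Y - U * X) i j ^ 2)
    (hXnext : ∀ X : Matrix (Fin d) (Fin p) ℝ,
      (1 / (2 * (s : ℝ))) * (∑ k, ∑ j, (S * U * Xnext) k j ^ 2) -
          ∑ i, ∑ j, (Uᵀ * (Y - ((1 : Matrix (Fin N) (Fin N) ℝ) -
            ((1 : ℝ) / s) • (Sᵀ * S)) * (U * Xt))) i j * Xnext i j ≤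
        (1 / (2 * (s : ℝ))) * (∑ k, ∑ j, (S * U * X) k j ^ 2) -
          ∑ i, ∑ j, (Uᵀ * (Y - ((1 : Matrix (Fin N) (Fin N) ℝ) -
            ((1 : ℝ) / s) • (Sᵀ * S)) * (U * Xt))) i j * X i j) :
    (1 / (s : ℝ)) * ∑ k, ∑ j, (S * U * (Xnext - XLS)) k j ^ 2 ≤
      ∑ i, ∑ j, (U * (XLS - Xt)) i j *
        ((((1 : Matrix (Fin N) (Fin N) ℝ) - ((1 : ℝ) / s) • (Sᵀ * S)) *
          (U * (Xnext - XLS))) i j) := by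
  have hs' : (0:ℝ) < (s:ℝ) := by exact_mod_cast hs
  set Yt : Matrix (Fin N) (Fin p) ℝ :=
    Y - ((1 : Matrix (Fin N) (Fin N) ℝ) - ((1:ℝ)/s) • (Sᵀ * S)) * (U * Xt) with hYt
  -- gradient condition for XLS
  have claim1 : ∀ E : Matrix (Fin d) (Fin p) ℝ, ip (Y - U * XLS) (U * E) = 0 := by
    intro E
    have hzero : -(ip (Y - U * XLS) (U * E)) = 0 := by
      apply lin_eq_zero (q := (1/2 : ℝ) * ip (U * E) (U * E))
      · have := ip_self_nonneg (U * E); linarith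
      · intro t
        have h := hLS (XLS + t • E)
        have hexp : Y - U * (XLS + t • E) = (Y - U * XLS) - t • (U * E) := by
          rw [Matrix.mul_add, Matrix.mul_smul]; abel
        rw [hexp] at h
        have hsum : (∑ i, ∑ j, ((Y - U * XLS) - t • (U * E)) i j ^ 2)
            = (∑ i, ∑ j, (Y - U * XLS) i j ^ 2)
              - 2 * t * ip (Y - U * XLS) (U * E) + t ^ 2 * ip (U * E) (U * E) := by
          simp only [ip, Finset.mul_sum, ← Finset.sum_sub_distrib, ← Finset.sum_add_distrib]
          apply Finset.sum_congr rfl; intro i _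
          apply Finset.sum_congr rfl; intro j _
          simp only [Matrix.sub_apply, Matrix.smul_apply, smul_eq_mul]
          ring
        rw [hsum] at h
        nlinarith [h]
    linarith
  -- gradient condition for Xnext
  have claim2 : ∀ E : Matrix (Fin d) (Fin p) ℝ,
      (1/(s:ℝ)) * ip (S * U * Xnext) (S * U * E) - ip (Uᵀ * Yt) E = 0 := by
    intro E
    apply lin_eq_zero (q := (1/(2*(s:ℝ))) * ip (S * U * E) (S * U * E))
    · have h1 := ip_self_nonneg (S * U * E)
      have h2 : (0:ℝ) ≤ 1/(2*(s:ℝ)) := by positivity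
      exact mul_nonneg h2 h1
    · intro t
      have h := hXnext (Xnext + t • E)
      have hexp : S * U * (Xnext + t • E) = S * U * Xnext + t • (S * U * E) := by
        rw [Matrix.mul_add, Matrix.mul_smul]
      rw [hexp] at h
      have hsum : (∑ k, ∑ j, (S * U * Xnext + t • (S * U * E)) k j ^ 2)
          = (∑ k, ∑ j, (S * U * Xnext) k j ^ 2)
            + 2 * t * ip (S * U * Xnext) (S * U * E) + t ^ 2 * ip (S * U * E) (S * U * E) := by
        simp only [ip, Finset.mul_sum, ← Finset.sum_add_distrib]
        apply Finset.sum_congr rfl; intro i _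
        apply Finset.sum_congr rfl; intro j _
        simp only [Matrix.add_apply, Matrix.smul_apply, smul_eq_mul]
        ring
      have hlin : (∑ i, ∑ j, (Uᵀ * Yt) i j * (Xnext + t • E) i j)
          = (∑ i, ∑ j, (Uᵀ * Yt) i j * Xnext i j) + t * ip (Uᵀ * Yt) E := by
        simp only [ip, Finset.mul_sum, ← Finset.sum_add_distrib]
        apply Finset.sum_congr rfl; intro i _
        apply Finset.sum_congr rfl; intro j _
        simp only [Matrix.add_apply, Matrix.smul_apply, smul_eq_mul]
        ring
      rw [hsum, hlin] at h
      have hss : (1/(2*(s:ℝ))) * (2 * t * ip (S * U * Xnext) (S * U * E))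
          = t * ((1/(s:ℝ)) * ip (S * U * Xnext) (S * U * E)) := by
        field_simp
      nlinarith [h]
  -- algebra
  set D : Matrix (Fin N) (Fin p) ℝ := U * Xnext - U * XLS with hD
  clear_value D
  have hUΔ : U * (Xnext - XLS) = D := by rw [hD, Matrix.mul_sub]
  have hSUΔ : S * U * (Xnext - XLS) = S * D := by rw [Matrix.mul_assoc, hUΔ]
  rw [sumsq_eq_ip, hSUΔ, hUΔ]
  have hrhs : (∑ i, ∑ j, (U * (XLS - Xt)) i j *
        ((((1 : Matrix (Fin N) (Fin N) ℝ) - ((1:ℝ)/s) • (Sᵀ * S)) * D) i j))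
      = ip (U * (XLS - Xt)) (((1 : Matrix (Fin N) (Fin N) ℝ) - ((1:ℝ)/s) • (Sᵀ * S)) * D) := rfl
  rw [hrhs]
  have hadjS : ∀ A B : Matrix (Fin N) (Fin p) ℝ,
      ip (S * A) (S * B) = ip A (Sᵀ * S * B) := by
    intro A B
    rw [ip_adj S A (S * B), Matrix.mul_assoc]
  have hadjSts : ∀ A B : Matrix (Fin N) (Fin p) ℝ,
      ip (Sᵀ * S * A) B = ip A (Sᵀ * S * B) := by
    intro A B
    rw [Matrix.mul_assoc, ip_adj Sᵀ (S * A) B, Matrix.transpose_transpose, hadjS]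
  have hsplitD : S * D = S * (U * Xnext) - S * (U * XLS) := by rw [hD, Matrix.mul_sub]
  have e1 : ip (S * D) (S * D)
      = ip (S * (U * Xnext)) (S * D) - ip (S * (U * XLS)) (S * D) := by
    nth_rewrite 1 [hsplitD]
    rw [ip_sub_left]
  have c2' := claim2 (Xnext - XLS)
  rw [hSUΔ] at c2'
  have hadj1 : ip (Uᵀ * Yt) (Xnext - XLS) = ip Yt D := by
    rw [ip_comm, ← ip_adj U (Xnext - XLS) Yt, hUΔ, ip_comm]
  have hc2 : (1/(s:ℝ)) * ip (S * (U * Xnext)) (S * D) = ip Yt D := by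
    rw [Matrix.mul_assoc S U Xnext] at c2'
    linarith [c2', hadj1]
  have e2 : ip (S * (U * XLS)) (S * D) = ip (U * XLS) (Sᵀ * S * D) := hadjS _ _
  have hM : ((1 : Matrix (Fin N) (Fin N) ℝ) - ((1:ℝ)/s) • (Sᵀ * S)) * (U * Xt)
      = U * Xt - ((1:ℝ)/s) • (Sᵀ * S * (U * Xt)) := by
    rw [Matrix.sub_mul, Matrix.one_mul, Matrix.smul_mul]
  have e3 : ip Yt D = ip Y D - ip (U * Xt) D + (1/(s:ℝ)) * ip (U * Xt) (Sᵀ * S * D) := by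
    rw [hYt, hM, ip_sub_left, ip_sub_left, ip_smul_left, hadjSts]
    ring
  have e4 : ip Y D = ip (U * XLS) D := by
    have := claim1 (Xnext - XLS)
    rw [hUΔ, ip_sub_left] at this
    linarith
  have e5 : ip (U * (XLS - Xt)) (((1 : Matrix (Fin N) (Fin N) ℝ) - ((1:ℝ)/s) • (Sᵀ * S)) * D)
      = ip (U * XLS) D - (1/(s:ℝ)) * ip (U * XLS) (Sᵀ * S * D)
        - ip (U * Xt) D + (1/(s:ℝ)) * ip (U * Xt) (Sᵀ * S * D) := by
    have h1 : U * (XLS - Xt) = U * XLS - U * Xt := Matrix.mul_sub U XLS Xt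
    have h2 : ((1 : Matrix (Fin N) (Fin N) ℝ) - ((1:ℝ)/s) • (Sᵀ * S)) * D
        = D - ((1:ℝ)/s) • (Sᵀ * S * D) := by
      rw [Matrix.sub_mul, Matrix.one_mul, Matrix.smul_mul]
    rw [h1, h2, ip_sub_left, ip_sub_right, ip_sub_right, ip_smul_right, ip_smul_right]
    ring
  have final : (1/(s:ℝ)) * ip (S * D) (S * D)
      = ip (U * (XLS - Xt)) (((1 : Matrix (Fin N) (Fin N) ℝ) - ((1:ℝ)/s) • (Sᵀ * S)) * D) := by
    rw [e1, mul_sub, hc2, e2, e3, e4, e5]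
    ring
  rw [final]
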